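/- Let σ be a primitive invertible substitution on the two-letter alphabet 𝒜 = {a,b} with det M_σ = 1. Then the following are equivalent: (1) σ is selfdual; (2) there exist positive integers m, k with k ∣ m²−1 such that M_σ = [[m, k],[(m²−1)/k, m]], or positive integers m, k with m ∣ k²+1 such that M_σ = [[m, k],[k, (k²+1)/m]]; (3) Q⁻¹ · M_σ · Q = M_σ⁻¹ for Q = [[−1,0],[0,1]] or for Q = [[0,−1],[1,0]]; (4) Pᵀ · M_σ · P = M_σᵀ for P = [[0,1],[1,0]] or for P = the identity matrix. -/

import Mathlib

open scoped Matrix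

/-- The two-letter alphabet `𝒜 = {a, b}`; the letter `a` is `0` and the letter `b` is `1`. -/
abbrev A2 := Fin 2

/-- A substitution on the two-letter alphabet, given by the images of the two letters.
(The nonerasing condition is stated separately as `TwoSubst.NonErasing`.) -/
abbrev Subst := A2 → List A2

namespace TwoSubst

/-- A substitution is non-erasing if the images of the letters are nonempty words. -/
def NonErasing (σ : Subst) : Prop := ∀ i : A2, σ i ≠ []

/-- The extension of a substitution to finite words (the morphism of the free monoid). -/
def apply (σ : Subst) (w : List A2) : List A2 := w.flatMap σ

/-- The `n`-th power `σ^n` of a substitution (as a substitution). -/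
def substPow (σ : Subst) (n : ℕ) : Subst := fun i => (apply σ)^[n] [i]

/-- Composition of substitutions: `(σ ∘ τ)(i) = σ(τ(i))`. -/
def comp (σ τ : Subst) : Subst := fun i => apply σ (τ i)

/-- The substitution matrix `M_σ`: entry `(i, j)` is the number of occurrences of the
letter `i` in `σ(j)`. -/
def M (σ : Subst) : Matrix (Fin 2) (Fin 2) ℤ := fun i j => ((σ j).count i : ℤ)

/-- A substitution is primitive if some power of its substitution matrix has all
entries positive. -/
def Primitive (σ : Subst) : Prop := ∃ n : ℕ, 0 < n ∧ ∀ i j, 0 < (M σ ^ n) i j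

/-- A finite word, regarded as an element of the free group `F₂`. -/
def toFG (w : List A2) : FreeGroup A2 := (w.map FreeGroup.of).prod

/-- The endomorphism of the free group `F₂` induced by a substitution. -/
def endo (σ : Subst) : Monoid.End (FreeGroup A2) := FreeGroup.lift fun i => toFG (σ i)

/-- A substitution is invertible if its extension to the free group `F₂` is an
automorphism of `F₂`. -/
def IsInvertible (σ : Subst) : Prop := Function.Bijective (endo σ)

/-- Two substitutions are conjugate, `σ ~ ρ`, if `σ = γ_w ∘ ρ` as endomorphisms of `F₂`
for some `w ∈ F₂`, where `γ_w x = w * x * w⁻¹`. -/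
def Conj (σ ρ : Subst) : Prop := ∃ w : FreeGroup A2, ∀ x, endo σ x = w * endo ρ x * w⁻¹

/-- `w` is a (finite) factor of the bi-infinite word `u : ℤ → A2`. -/
def IsFactor (w : List A2) (u : ℤ → A2) : Prop :=
  ∃ k : ℤ, w = (List.range w.length).map fun i => u (k + i)

/-- The hull `X_σ`: the set of bi-infinite words all of whose finite factors appear as
factors of `σ^n(a)` or `σ^n(b)` for some `n ∈ ℕ`. -/
def Hull (σ : Subst) : Set (ℤ → A2) :=
  { u | ∀ w : List A2, IsFactor w u → ∃ (n : ℕ) (x : A2), w <:+: substPow σ n x }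

/-- The substitution `E : a ↦ b, b ↦ a`. -/
def Esub : Subst := ![[1], [0]]

/-- The substitution `L : a ↦ a, b ↦ ab`. -/
def Lsub : Subst := ![[0], [0, 1]]

/-- The composition `L^{a₁} ∘ E ∘ L^{a₂} ∘ E ∘ ⋯ ∘ E ∘ L^{a_m}` encoded by the
nonempty list of exponents `a₁ :: [a₂, …, a_m]`. -/
def chain : ℕ → List ℕ → Subst
  | a, [] => substPow Lsub a
  | a, b :: rest => comp (substPow Lsub a) (comp Esub (chain b rest))

/-- The letter-exchange map `a ↦ b, b ↦ a` on letters. -/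
def swapA : A2 → A2 := fun i => if i = 0 then 1 else 0

/-- The substitution matrix with real entries. -/
noncomputable def Mreal (σ : Subst) : Matrix (Fin 2) (Fin 2) ℝ := (M σ).map fun z => (z : ℝ)

/-- `lam` is the inflation factor (Perron–Frobenius eigenvalue) of `σ`: it is an
eigenvalue of `M_σ` admitting a positive eigenvector. -/
def IsInflation (σ : Subst) (lam : ℝ) : Prop :=
  ∃ v : Fin 2 → ℝ, (∀ i, 0 < v i) ∧ (Mreal σ).mulVec v = lam • v

/-- `α` is the frequency of `σ`: `α ∈ (0,1)` and `(1-α, α)` is an eigenvector of `M_σ`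
for an eigenvalue with positive eigenvector (necessarily the Perron-Frobenius
eigenvalue, i.e. the inflation factor, when `σ` is primitive). -/
def IsFreq (σ : Subst) (α : ℝ) : Prop :=
  0 < α ∧ α < 1 ∧ ∃ lam : ℝ, (Mreal σ).mulVec ![1 - α, α] = lam • ![1 - α, α]

/-- The automorphism `τ_a : a ↦ a⁻¹, b ↦ b` of the free group `F₂`. -/
def tauA : Monoid.End (FreeGroup A2) :=
  FreeGroup.lift fun i : A2 => if i = 0 then (FreeGroup.of (0 : A2))⁻¹ else FreeGroup.of 1

/-- `ρ` is the reciprocal substitution `σ̄ = τ_a ∘ σ⁻¹ ∘ τ_a⁻¹` of `σ`, where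
`φ` is the inverse automorphism `σ⁻¹` (note `τ_a⁻¹ = τ_a`). -/
def IsReciprocal (σ ρ : Subst) (φ : Monoid.End (FreeGroup A2)) : Prop :=
  (∀ x, φ (endo σ x) = x) ∧ (∀ x, endo σ (φ x) = x) ∧
    NonErasing ρ ∧ ∀ x, endo ρ x = tauA (φ (tauA x))

/-- `σ` is a selfdual substitution (relative to its reciprocal `ρ = σ̄`):
`σ ~ σ̄` or `σ ~ E ∘ σ̄ ∘ E`. -/
def SelfDual (σ ρ : Subst) : Prop :=
  Conj σ ρ ∨ Conj σ (comp Esub (comp ρ Esub))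

/-! ### Strands and dual maps -/

/-- Integer vectors in the plane. -/
abbrev V2 := Fin 2 → ℤ

/-- The abelianisation map `A : 𝒜* → ℤ²`, counting occurrences of each letter. -/
def Avec (w : List A2) : V2 := fun i => (w.count i : ℤ)

/-- The space `𝒢` (and its dual `𝒢*`): formal finite real linear combinations of the
basis elements `(W, i)` (resp. `(W, i*)`), `W ∈ ℤ²`, `i ∈ 𝒜`. -/
abbrev Gspace := (V2 × A2) →₀ ℝ

/-- The image of the basis element `(W, i)` under `E₁(σ)`. -/
noncomputable def E1Basis (σ : Subst) (p : V2 × A2) : Gspace :=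
  ∑ k ∈ Finset.range (σ p.2).length,
    Finsupp.single ((M σ).mulVec p.1 + Avec ((σ p.2).take k), (σ p.2).getD k p.2) (1 : ℝ)

/-- The one-dimensional extension `E₁(σ)`, as a linear map on `𝒢`. -/
noncomputable def E1 (σ : Subst) : Gspace →ₗ[ℝ] Gspace :=
  Finsupp.lift Gspace ℝ (V2 × A2) (E1Basis σ)

/-- The image of the basis element `(W, i*)` under the dual map `E₁*(σ)`:
`E₁*(σ)(W, i*) = Σ_{j,k : σ(j)_k = i} (M_σ⁻¹·(W + A(σ(j)_{k+1}⋯σ(j)_{|σ(j)|})), j*)`. -/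
noncomputable def E1starBasis (σ : Subst) (p : V2 × A2) : Gspace :=
  ∑ j : A2, ∑ k ∈ Finset.range (σ j).length,
    if (σ j).getD k j = p.2 then
      Finsupp.single ((M σ)⁻¹.mulVec (p.1 + Avec ((σ j).drop (k + 1))), j) (1 : ℝ)
    else 0

/-- The dual map `E₁*(σ)`, as a linear map on `𝒢*`. -/
noncomputable def E1star (σ : Subst) : Gspace →ₗ[ℝ] Gspace :=
  Finsupp.lift Gspace ℝ (V2 × A2) (E1starBasis σ)

/-- The basis vector `e_a = (1,0)`. -/
def ea : V2 := ![1, 0]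

/-- The basis vector `e_b = (0,1)`. -/
def eb : V2 := ![0, 1]

/-- `γ(0), …, γ(n)` is a finite dual strand: each step is `e_a` or `-e_b`. -/
def IsDualStrand (n : ℕ) (γ : ℕ → V2) : Prop :=
  ∀ k < n, γ (k + 1) - γ k = ea ∨ γ (k + 1) - γ k = -eb

/-- The element of `𝒢*` associated with a finite dual strand `γ(0), …, γ(n)`:
the sum of `(γ(k), b*)` over the `e_a`-steps and `(γ(k+1), a*)` over the `-e_b`-steps
(the letter `a` is `0`, the letter `b` is `1`). -/
noncomputable def strandElem (n : ℕ) (γ : ℕ → V2) : Gspace :=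
  ∑ k ∈ Finset.range n,
    if γ (k + 1) - γ k = ea then Finsupp.single (γ k, (1 : A2)) (1 : ℝ)
    else Finsupp.single (γ (k + 1), (0 : A2)) (1 : ℝ)

/-! ### Endomorphisms of the free group -/

/-- The exponent-sum homomorphism of the generator `i` on `F₂`. -/
def expSum (i : A2) : FreeGroup A2 →* Multiplicative ℤ :=
  FreeGroup.lift fun j : A2 => Multiplicative.ofAdd (if j = i then (1 : ℤ) else 0)

/-- The abelianised matrix of an endomorphism of `F₂`: entry `(i,j)` is the exponent
sum of the generator `i` in the image of the generator `j`. -/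
def abelMatrix (σ : Monoid.End (FreeGroup A2)) : Matrix (Fin 2) (Fin 2) ℤ :=
  fun i j => Multiplicative.toAdd (expSum i (σ (FreeGroup.of j)))

/-- `wprod ρ w k = w · ρ(w) · ρ²(w) ⋯ ρ^{k−1}(w)`. -/
def wprod (ρ : Monoid.End (FreeGroup A2)) (w : FreeGroup A2) : ℕ → FreeGroup A2
  | 0 => 1
  | k + 1 => wprod ρ w k * (ρ ^ k) w

end TwoSubst

/-!
Abelianisation kills inner automorphisms, so conjugate substitutions have the same matrix.
Conversely, if two invertible substitutions have the same matrix, the images of the letters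
are two generating pairs of positive words of `F₂` with the same letter counts. Conjugating
such a pair by the longest common prefix of its words gives either the pair of letters or a
pair in which one word is a suffix of the other (a suffix automaton on which `F₂` acts rules
out everything else), and cutting the shorter word off the longer one shows that the pair is
conjugate to a reversed standard pair, which is determined by its letter counts. Hence the two
substitutions are conjugate.

With `D = diag(-1, 1)` and `E` the letter exchange, `M(σ̄) = D M_σ⁻¹ D`, so `σ` is selfdual
iff `M_σ = D M_σ⁻¹ D` or `M_σ = E D M_σ⁻¹ D E`; for `det M_σ = 1` this says that the diagonal,
resp. the antidiagonal, entries of `M_σ` agree, and conditions (2)–(4) are rewritings of that.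
-/

namespace PEquiv

variable {α β : Type*}

open Classical in
noncomputable def ofInjective (f : α → Option β)
    (hf : ∀ a a' b, f a = some b → f a' = some b → a = a') : α ≃. β where
  toFun := f
  invFun b := if h : ∃ a, f a = some b then some h.choose else none
  inv a b := by
    constructor
    · intro h
      split_ifs at h with hb
      · cases h
        exact hb.choose_spec
    · intro h
      have hb : ∃ a, f a = some b := ⟨a, h⟩
      simp only [hb, dite_true, Option.some.injEq]
      exact hf _ _ _ hb.choose_spec h

@[simp] lemma ofInjective_apply (f : α → Option β) (hf) (a : α) : ofInjective f hf a = f a := rfl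

def sumExtend (e : α ≃. α) : α ⊕ α → α ⊕ α
  | .inl a => (e a).elim (.inr a) .inl
  | .inr b => (e.symm b).elim (.inl b) .inr

lemma sumExtend_symm_sumExtend (e : α ≃. α) (z : α ⊕ α) :
    sumExtend e.symm (sumExtend e z) = z := by
  rcases z with a | b
  · cases h : e a with
    | none => simp [sumExtend, h]
    | some b => simp [sumExtend, h, (eq_some_iff e).mpr h]
  · cases h : e.symm b with
    | none => simp [sumExtend, h]
    | some a => simp [sumExtend, h, (eq_some_iff e).mp h]

def toPermSum (e : α ≃. α) : Equiv.Perm (α ⊕ α) :=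
  ⟨sumExtend e, sumExtend e.symm, sumExtend_symm_sumExtend e, sumExtend_symm_sumExtend e.symm⟩

lemma toPermSum_inl_eq_inl_iff (e : α ≃. α) {a b : α} :
    e.toPermSum (.inl a) = .inl b ↔ e a = some b := by
  change sumExtend e (.inl a) = _ ↔ _
  cases h : e a <;> simp [sumExtend, h]

end PEquiv

lemma List.exists_longest_common_prefix {α : Type*} [DecidableEq α] (u v : List α) :
    ∃ p u₁ v₁, u = p ++ u₁ ∧ v = p ++ v₁ ∧ (u₁ = [] ∨ v₁ = [] ∨ u₁.head? ≠ v₁.head?) := by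
  induction u generalizing v with
  | nil => exact ⟨[], [], v, rfl, rfl, Or.inl rfl⟩
  | cons c u ih =>
    cases v with
    | nil => exact ⟨[], c :: u, [], rfl, rfl, Or.inr (Or.inl rfl)⟩
    | cons d v =>
      by_cases hcd : c = d
      · obtain ⟨p, u₁, v₁, rfl, rfl, h⟩ := ih v
        exact ⟨c :: p, u₁, v₁, rfl, by rw [hcd]; rfl, h⟩
      · exact ⟨[], c :: u, d :: v, rfl, rfl, by simp [hcd]⟩

namespace Matrix

lemma pow_apply_eq_zero_of_apply_eq_zero {R : Type*} [Semiring R]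
    {A : Matrix (Fin 2) (Fin 2) R} {i j : Fin 2} (hij : i ≠ j) (h : A i j = 0) (n : ℕ) :
    (A ^ n) i j = 0 := by
  have hA : A.BlockTriangular fun k => if k = i then 1 else 0 := by
    intro k l hkl
    have hk : k = i := by by_contra hk; simp [hk] at hkl
    have hl : l = j := by
      by_contra hl; apply hij; fin_cases i <;> fin_cases j <;> fin_cases l <;> simp_all
    rw [hk, hl, h]
  exact hA.pow n (by simp [Ne.symm hij])

variable {A : Matrix (Fin 2) (Fin 2) ℤ}

lemma inv_eq_of_det_eq_one (h : A.det = 1) : A⁻¹ = !![A 1 1, -A 0 1; -A 1 0, A 0 0] := by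
  rw [inv_def, h, Ring.inverse_one, one_smul, adjugate_fin_two]

lemma eq_diag_mul_inv_mul_diag_iff (h : A.det = 1) :
    A = !![-1, 0; 0, 1] * A⁻¹ * !![-1, 0; 0, 1] ↔ A 0 0 = A 1 1 := by
  rw [inv_eq_of_det_eq_one h]
  obtain ⟨p, q, r, s, rfl⟩ : ∃ p q r s, A = !![p, q; r, s] := ⟨_, _, _, _, eta_fin_two A⟩
  rw [← ext_iff]
  simp [Fin.forall_fin_two]
  omega

lemma eq_swap_mul_diag_mul_inv_mul_diag_mul_swap_iff (h : A.det = 1) :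
    A = !![0, 1; 1, 0] * (!![-1, 0; 0, 1] * A⁻¹ * !![-1, 0; 0, 1]) * !![0, 1; 1, 0] ↔
      A 0 1 = A 1 0 := by
  rw [inv_eq_of_det_eq_one h]
  obtain ⟨p, q, r, s, rfl⟩ : ∃ p q r s, A = !![p, q; r, s] := ⟨_, _, _, _, eta_fin_two A⟩
  rw [← ext_iff]
  simp [Fin.forall_fin_two]
  omega

lemma conj_eq_inv_iff (h : A.det = 1) :
    ((!![(-1 : ℤ), 0; 0, 1])⁻¹ * A * !![(-1 : ℤ), 0; 0, 1] = A⁻¹ ∨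
      (!![(0 : ℤ), -1; 1, 0])⁻¹ * A * !![(0 : ℤ), -1; 1, 0] = A⁻¹) ↔
    (A 0 0 = A 1 1 ∨ A 0 1 = A 1 0) := by
  have hD : !![(-1 : ℤ), 0; 0, 1] * !![-1, 0; 0, 1] = 1 := by simp [one_fin_two]
  rw [inv_eq_of_det_eq_one (A := A) h,
    inv_eq_of_det_eq_one (A := !![0, -1; 1, 0]) (by simp [det_fin_two]), inv_eq_left_inv hD]
  obtain ⟨p, q, r, s, rfl⟩ : ∃ p q r s, A = !![p, q; r, s] := ⟨_, _, _, _, eta_fin_two A⟩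
  rw [← ext_iff, ← ext_iff]
  simp [Fin.forall_fin_two]
  omega

lemma transpose_conj_eq_transpose_iff :
    ((!![(0 : ℤ), 1; 1, 0])ᵀ * A * !![(0 : ℤ), 1; 1, 0] = Aᵀ ∨
      (1 : Matrix (Fin 2) (Fin 2) ℤ)ᵀ * A * (1 : Matrix (Fin 2) (Fin 2) ℤ) = Aᵀ) ↔
    (A 0 0 = A 1 1 ∨ A 0 1 = A 1 0) := by
  obtain ⟨p, q, r, s, rfl⟩ : ∃ p q r s, A = !![p, q; r, s] := ⟨_, _, _, _, eta_fin_two A⟩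
  have hE : (!![(0 : ℤ), 1; 1, 0])ᵀ = !![0, 1; 1, 0] := by
    rw [← ext_iff]; simp [Fin.forall_fin_two]
  rw [hE, transpose_one, one_mul, mul_one, ← ext_iff, ← ext_iff]
  simp [Fin.forall_fin_two]
  omega

lemma exists_param_iff (h : A.det = 1) (h00 : 0 < A 0 0) (h01 : 0 < A 0 1) :
    ((∃ m k : ℤ, 0 < m ∧ 0 < k ∧ k ∣ m ^ 2 - 1 ∧ A = !![m, k; (m ^ 2 - 1) / k, m]) ∨
      (∃ m k : ℤ, 0 < m ∧ 0 < k ∧ m ∣ k ^ 2 + 1 ∧ A = !![m, k; k, (k ^ 2 + 1) / m])) ↔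
    (A 0 0 = A 1 1 ∨ A 0 1 = A 1 0) := by
  rw [det_fin_two] at h
  constructor
  · rintro (⟨m, k, -, -, -, rfl⟩ | ⟨m, k, -, -, -, rfl⟩) <;> simp
  · rintro (hd | hd)
    · have hmk : A 0 0 ^ 2 - 1 = A 0 1 * A 1 0 := by linear_combination h + A 0 0 * hd
      refine Or.inl ⟨A 0 0, A 0 1, h00, h01, ⟨A 1 0, hmk⟩, ?_⟩
      rw [hmk, Int.mul_ediv_cancel_left _ h01.ne', eta_fin_two A, hd]
      simp
    · have hmk : A 0 1 ^ 2 + 1 = A 0 0 * A 1 1 := by linear_combination -h + A 0 1 * hd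
      refine Or.inr ⟨A 0 0, A 0 1, h00, h01, ⟨A 1 1, hmk⟩, ?_⟩
      rw [hmk, Int.mul_ediv_cancel_left _ h00.ne', eta_fin_two A, hd]
      simp

end Matrix

namespace Subgroup

lemma closure_pair_mul_left {G : Type*} [Group G] (a b : G) :
    closure {a, b * a} = closure {a, b} := by
  apply le_antisymm <;>
    rw [closure_le, Set.insert_subset_iff, Set.singleton_subset_iff] <;>
    refine ⟨subset_closure (by simp), ?_⟩
  · exact mul_mem (subset_closure (by simp)) (subset_closure (by simp))
  · simpa using mul_mem (subset_closure (show b * a ∈ {a, b * a} by simp))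
      (inv_mem (subset_closure (show a ∈ {a, b * a} by simp)))

lemma closure_pair_conj_eq_top {G : Type*} [Group G] {x y : G} (g : G)
    (h : closure {x, y} = ⊤) : closure {g * x * g⁻¹, g * y * g⁻¹} = ⊤ := by
  have hmap := MonoidHom.map_closure (MulAut.conj g).toMonoidHom {x, y}
  rw [h, Set.image_pair, map_top_of_surjective _ (MulAut.conj g).surjective] at hmap
  simpa using hmap.symm

lemma closure_pair_conj_eq_top_iff {G : Type*} [Group G] (g x y : G) :
    closure {g * x * g⁻¹, g * y * g⁻¹} = ⊤ ↔ closure {x, y} = ⊤ :=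
  ⟨fun h => by simpa [mul_assoc] using closure_pair_conj_eq_top g⁻¹ h,
    closure_pair_conj_eq_top g⟩

end Subgroup

namespace TwoSubst

open Subgroup

@[simp] lemma toFG_nil : toFG [] = 1 := rfl

@[simp] lemma toFG_cons (c : A2) (w : List A2) : toFG (c :: w) = FreeGroup.of c * toFG w := by
  simp [toFG]

@[simp] lemma toFG_append (w₁ w₂ : List A2) : toFG (w₁ ++ w₂) = toFG w₁ * toFG w₂ := by
  simp [toFG]

lemma endo_of (σ : Subst) (i : A2) : endo σ (FreeGroup.of i) = toFG (σ i) :=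
  FreeGroup.lift_apply_of

lemma endo_toFG (σ : Subst) (w : List A2) : endo σ (toFG w) = toFG (apply σ w) := by
  induction w with
  | nil => rfl
  | cons c w ih => simp [apply, endo_of, ih]

lemma endo_comp (σ τ : Subst) : endo (comp σ τ) = endo σ * endo τ := by
  refine FreeGroup.ext_hom _ _ fun i => ?_
  show endo (comp σ τ) (FreeGroup.of i) = endo σ (endo τ (FreeGroup.of i))
  rw [endo_of, endo_of, endo_toFG]; rfl

@[simp] lemma expSum_of (i j : A2) :
    expSum i (FreeGroup.of j) = Multiplicative.ofAdd (if j = i then 1 else 0) :=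
  FreeGroup.lift_apply_of

@[simp] lemma tauA_of_zero : tauA (FreeGroup.of 0) = (FreeGroup.of 0)⁻¹ := FreeGroup.lift_apply_of

@[simp] lemma tauA_of_one : tauA (FreeGroup.of 1) = FreeGroup.of 1 := FreeGroup.lift_apply_of

lemma toAdd_expSum_toFG (i : A2) (w : List A2) :
    Multiplicative.toAdd (expSum i (toFG w)) = (w.count i : ℤ) := by
  induction w with
  | nil => simp
  | cons c w ih =>
    simp only [toFG_cons, map_mul, toAdd_mul, ih, expSum_of, toAdd_ofAdd, List.count_cons,
      beq_iff_eq]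
    split_ifs <;> simp; ring

lemma expSum_conj (i : A2) (g x : FreeGroup A2) : expSum i (g * x * g⁻¹) = expSum i x := by
  simp

lemma toAdd_expSum_apply (f : Monoid.End (FreeGroup A2)) (i : A2) (y : FreeGroup A2) :
    Multiplicative.toAdd (expSum i (f y)) =
      ∑ k, abelMatrix f i k * Multiplicative.toAdd (expSum k y) := by
  induction y using FreeGroup.induction_on with
  | C1 => simp
  | of j => simp [abelMatrix]
  | inv_of j ih => simp [ih]
  | mul x y hx hy => simp [hx, hy, mul_add, Finset.sum_add_distrib]

lemma abelMatrix_mul (f g : Monoid.End (FreeGroup A2)) :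
    abelMatrix (f * g) = abelMatrix f * abelMatrix g := by
  ext i j
  exact toAdd_expSum_apply f i (g (FreeGroup.of j))

lemma abelMatrix_one : abelMatrix 1 = 1 := by
  ext i j
  simp [abelMatrix, Matrix.one_apply, eq_comm]

lemma abelMatrix_endo (σ : Subst) : abelMatrix (endo σ) = M σ := by
  ext i j
  exact (congrArg _ (endo_of σ j)).trans (toAdd_expSum_toFG i (σ j))

lemma abelMatrix_tauA : abelMatrix tauA = !![-1, 0; 0, 1] := by
  ext i j
  fin_cases i <;> fin_cases j <;> simp [abelMatrix]

lemma abelMatrix_eq_of_conj {f g : Monoid.End (FreeGroup A2)} {w : FreeGroup A2}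
    (h : ∀ x, f x = w * g x * w⁻¹) : abelMatrix f = abelMatrix g := by
  ext i j
  simp only [abelMatrix, h, expSum_conj]

lemma M_comp (σ τ : Subst) : M (comp σ τ) = M σ * M τ := by
  rw [← abelMatrix_endo, endo_comp, abelMatrix_mul, abelMatrix_endo, abelMatrix_endo]

lemma closure_singleton_ne_top (g : FreeGroup A2) : closure {g} ≠ ⊤ := by
  intro h
  have hpow (x : FreeGroup A2) : ∃ k : ℤ, g ^ k = x := by
    rw [← mem_zpowers_iff, zpowers_eq_closure, h]; trivial
  obtain ⟨k, hk⟩ := hpow (FreeGroup.of 0)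
  obtain ⟨l, hl⟩ := hpow (FreeGroup.of 1)
  have : FreeGroup.of (0 : A2) * FreeGroup.of 1 = FreeGroup.of 1 * FreeGroup.of 0 := by
    rw [← hk, ← hl, ← zpow_add, ← zpow_add, add_comm]
  exact absurd this (by decide)

lemma ne_nil_of_closure_eq_top {u v : List A2} (h : closure {toFG u, toFG v} = ⊤) : u ≠ [] := by
  rintro rfl
  rw [toFG_nil, closure_insert_one] at h
  exact closure_singleton_ne_top _ h

section SuffixAutomaton

variable (W : Set (List A2))

open Classical in
noncomputable def collapse (z : List A2) : List A2 := if z ∈ W then [] else z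

open Classical in
/-- The automaton whose states are the suffixes of the words of `W`, a word of `W` being
identified with the base state `[]`; reading the letter `x` prepends it to the state. -/
noncomputable def suffixStep (x : A2) (z : List A2) : Option (List A2) :=
  if ∃ w ∈ W, x :: z <:+ w then some (collapse W (x :: z)) else none

variable {W}

lemma suffixStep_injective (hW : W.InjOn List.head?) (x : A2) {z z' y : List A2}
    (h : suffixStep W x z = some y) (h' : suffixStep W x z' = some y) : z = z' := by
  unfold suffixStep collapse at h h'
  split_ifs at h h' with _ hz _ hz' <;> simp only [Option.some.injEq] at h h'
  · simpa using hW hz hz' rfl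
  all_goals subst h; simp_all

variable (W) in
noncomputable def suffixAction (hW : W.InjOn List.head?) :
    FreeGroup A2 →* Equiv.Perm (List A2 ⊕ List A2) :=
  FreeGroup.lift fun x =>
    (PEquiv.ofInjective (suffixStep W x) fun _ _ _ => suffixStep_injective hW x).toPermSum

lemma suffixAction_of_inl_eq_inl_iff (hW : W.InjOn List.head?) (x : A2) (z y : List A2) :
    suffixAction W hW (FreeGroup.of x) (.inl z) = .inl y ↔ suffixStep W x z = some y := by
  rw [suffixAction, FreeGroup.lift_apply_of, PEquiv.toPermSum_inl_eq_inl_iff,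
    PEquiv.ofInjective_apply]

lemma suffixAction_toFG_of_isSuffix (hW : W.InjOn List.head?) (hnil : [] ∉ W)
    (hsuffix : ∀ w ∈ W, ∀ w' ∈ W, w <:+ w' → w = w') {w : List A2} (hw : w ∈ W)
    {z : List A2} (hz : z <:+ w) :
    suffixAction W hW (toFG z) (.inl []) = .inl (collapse W z) := by
  induction z with
  | nil => simp [collapse, hnil]
  | cons c z ih =>
    have hzw : z <:+ w := (List.suffix_cons c z).trans hz
    have hzW : z ∉ W := fun hzW => by
      have := hz.length_le
      rw [hsuffix z hzW w hw hzw] at this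
      simp at this
    rw [toFG_cons, map_mul, Equiv.Perm.mul_apply, ih hzw, collapse, if_neg hzW,
      suffixAction_of_inl_eq_inl_iff, suffixStep, if_pos ⟨w, hw, hz⟩]

/-- Reading a word of `W` in the suffix automaton fixes the base state, hence so does every
element of `F₂`; but the letter `x` fixes it only if `[x] ∈ W`. -/
theorem singleton_mem_of_closure_eq_top (hW : W.InjOn List.head?) (hnil : [] ∉ W)
    (hsuffix : ∀ w ∈ W, ∀ w' ∈ W, w <:+ w' → w = w') (hgen : closure (toFG '' W) = ⊤)
    (x : A2) : [x] ∈ W := by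
  have hfix : closure (toFG '' W) ≤
      (MulAction.stabilizer _ (.inl [] : List A2 ⊕ List A2)).comap (suffixAction W hW) := by
    rw [closure_le]
    rintro _ ⟨w, hw, rfl⟩
    simpa [collapse, hw] using
      suffixAction_toFG_of_isSuffix hW hnil hsuffix hw (List.suffix_refl w)
  have hx := hfix (hgen ▸ mem_top (FreeGroup.of x))
  rw [mem_comap, MulAction.mem_stabilizer_iff, Equiv.Perm.smul_def,
    suffixAction_of_inl_eq_inl_iff, suffixStep] at hx
  split_ifs at hx
  simp only [collapse, Option.some.injEq] at hx
  split_ifs at hx with hxW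
  · exact hxW

end SuffixAutomaton

lemma eq_letters_of_closure_eq_top {u v : List A2} (h : closure {toFG u, toFG v} = ⊤)
    (hhead : u.head? ≠ v.head?) (huv : ¬u <:+ v) (hvu : ¬v <:+ u) :
    (u = [0] ∧ v = [1]) ∨ (u = [1] ∧ v = [0]) := by
  have hu := ne_nil_of_closure_eq_top h
  have hv := ne_nil_of_closure_eq_top (Set.pair_comm (toFG u) _ ▸ h)
  have hmem := singleton_mem_of_closure_eq_top (W := {u, v})
    (by rintro a (rfl | rfl) b (rfl | rfl) hab <;> simp_all)
    (by rintro (h | h) <;> simp_all)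
    (by rintro a (rfl | rfl) b (rfl | rfl) hab <;> simp_all)
    (by rwa [Set.image_pair])
  have h0 := hmem 0
  have h1 := hmem 1
  simp only [Set.mem_insert_iff, Set.mem_singleton_iff] at h0 h1
  rcases h0 with rfl | rfl <;> rcases h1 with h1 | h1 <;> simp_all

/-- Reversals of the standard pairs of Sturmian words, up to exchanging the letters. -/
inductive RevStandardPair : List A2 → List A2 → Prop
  | ab : RevStandardPair [0] [1]
  | ba : RevStandardPair [1] [0]
  | left {u v : List A2} : RevStandardPair u v → RevStandardPair u (v ++ u)
  | right {u v : List A2} : RevStandardPair u v → RevStandardPair (u ++ v) v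

lemma toFG_append_eq_conj (p w : List A2) :
    toFG (p ++ w) = toFG p * toFG (w ++ p) * (toFG p)⁻¹ := by
  simp [mul_assoc]

theorem exists_revStandardPair_conj {u v : List A2} (h : closure {toFG u, toFG v} = ⊤) :
    ∃ g u₀ v₀, RevStandardPair u₀ v₀ ∧ toFG u = g * toFG u₀ * g⁻¹ ∧
      toFG v = g * toFG v₀ * g⁻¹ := by
  induction hn : u.length + v.length using Nat.strong_induction_on generalizing u v with
  | _ n ih =>
  obtain ⟨p, u₁, v₁, rfl, rfl, hpre⟩ := List.exists_longest_common_prefix u v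
  rw [toFG_append_eq_conj p u₁, toFG_append_eq_conj p v₁, closure_pair_conj_eq_top_iff] at h
  suffices ∃ g u₀ v₀, RevStandardPair u₀ v₀ ∧ toFG (u₁ ++ p) = g * toFG u₀ * g⁻¹ ∧
      toFG (v₁ ++ p) = g * toFG v₀ * g⁻¹ by
    obtain ⟨g, u₀, v₀, hstd, hu, hv⟩ := this
    refine ⟨toFG p * g, u₀, v₀, hstd, ?_, ?_⟩ <;>
      simp only [toFG_append_eq_conj p, hu, hv] <;> group
  have hlen : (u₁ ++ p).length + (v₁ ++ p).length = n := by
    simp only [List.length_append] at hn ⊢; omega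
  have hu := List.length_pos_iff.mpr (ne_nil_of_closure_eq_top h)
  have hv := List.length_pos_iff.mpr (ne_nil_of_closure_eq_top (Set.pair_comm (toFG _) _ ▸ h))
  by_cases huv : u₁ ++ p <:+ v₁ ++ p
  · obtain ⟨x, hx⟩ := huv
    rw [← hx, toFG_append x, closure_pair_mul_left] at h
    have hlt : (u₁ ++ p).length + x.length < n := by
      have := congrArg List.length hx
      simp only [List.length_append] at this hlen hu ⊢; omega
    obtain ⟨g, u₀, v₀, hstd, hu₀, hv₀⟩ := ih _ hlt h rfl
    refine ⟨g, u₀, v₀ ++ u₀, hstd.left, hu₀, ?_⟩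
    rw [← hx, toFG_append x, hu₀, hv₀]; simp [mul_assoc]
  by_cases hvu : v₁ ++ p <:+ u₁ ++ p
  · obtain ⟨x, hx⟩ := hvu
    rw [Set.pair_comm, ← hx, toFG_append x, closure_pair_mul_left, Set.pair_comm] at h
    have hlt : x.length + (v₁ ++ p).length < n := by
      have := congrArg List.length hx
      simp only [List.length_append] at this hlen hv ⊢; omega
    obtain ⟨g, u₀, v₀, hstd, hu₀, hv₀⟩ := ih _ hlt h rfl
    refine ⟨g, u₀ ++ v₀, v₀, hstd.right, ?_, hv₀⟩
    rw [← hx, toFG_append x, hu₀, hv₀]; simp [mul_assoc]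
  have hu₁ : u₁ ≠ [] := by rintro rfl; exact huv (List.suffix_append _ _)
  have hv₁ : v₁ ≠ [] := by rintro rfl; exact hvu (List.suffix_append _ _)
  have hhead : (u₁ ++ p).head? ≠ (v₁ ++ p).head? := by
    rw [List.head?_append_of_ne_nil _ hu₁, List.head?_append_of_ne_nil _ hv₁]
    tauto
  rcases eq_letters_of_closure_eq_top h hhead huv hvu with ⟨hu', hv'⟩ | ⟨hu', hv'⟩
  · exact ⟨1, _, _, .ab, by simp [hu'], by simp [hv']⟩
  · exact ⟨1, _, _, .ba, by simp [hu'], by simp [hv']⟩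

lemma Avec_append (u v : List A2) : Avec (u ++ v) = Avec u + Avec v := by
  ext i; simp [Avec, List.count_append]

lemma length_eq_Avec (w : List A2) : (w.length : ℤ) = Avec w 0 + Avec w 1 := by
  induction w with
  | nil => simp [Avec]
  | cons c w ih => fin_cases c <;> simp [Avec] at ih ⊢ <;> omega

lemma Avec_eq_of_toFG_eq_conj {u u' : List A2} {g : FreeGroup A2}
    (h : toFG u = g * toFG u' * g⁻¹) : Avec u = Avec u' := by
  ext i
  simpa [Avec, toAdd_expSum_toFG, expSum_conj] using
    congrArg (fun x => Multiplicative.toAdd (expSum i x)) h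

lemma RevStandardPair.length_pos {u v : List A2} (h : RevStandardPair u v) :
    0 < u.length ∧ 0 < v.length := by
  induction h <;> simp_all

lemma length_eq_of_Avec_eq {u v : List A2} (h : Avec u = Avec v) : u.length = v.length := by
  have := length_eq_Avec u
  rw [h, ← length_eq_Avec v] at this
  exact_mod_cast this

/-- The last move is read off from which of the two words is longer. -/
lemma RevStandardPair.eq_of_Avec_eq {u v u' v' : List A2} (h : RevStandardPair u v)
    (h' : RevStandardPair u' v') (hu : Avec u = Avec u') (hv : Avec v = Avec v') :
    u = u' ∧ v = v' := by
  have hlu := length_eq_of_Avec_eq hu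
  have hlv := length_eq_of_Avec_eq hv
  induction h generalizing u' v' with
  | ab | ba =>
    cases h' with
    | ab | ba => simp_all [Avec, funext_iff]
    | left h' | right h' => have := h'.length_pos; simp at hlu hlv; omega
  | @left a b h ih =>
    cases h' with
    | @left a' b' h' =>
      have hb : Avec b = Avec b' := by simpa [Avec_append, hu] using hv
      obtain ⟨rfl, rfl⟩ := ih h' hu hb hlu (length_eq_of_Avec_eq hb)
      simp
    | ab | ba => have := h.length_pos; simp at hlv; omega
    | right h' => have := h.length_pos; have := h'.length_pos; simp at hlu hlv; omega
  | @right a b h ih =>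
    cases h' with
    | @right a' b' h' =>
      have ha : Avec a = Avec a' := by simpa [Avec_append, hv] using hu
      obtain ⟨rfl, rfl⟩ := ih h' ha hv (length_eq_of_Avec_eq ha) hlv
      simp
    | ab | ba => have := h.length_pos; simp at hlu; omega
    | left h' => have := h.length_pos; have := h'.length_pos; simp at hlu hlv; omega

theorem exists_conj_of_Avec_eq {u v u' v' : List A2} (h : closure {toFG u, toFG v} = ⊤)
    (h' : closure {toFG u', toFG v'} = ⊤) (hu : Avec u = Avec u') (hv : Avec v = Avec v') :
    ∃ g, toFG u' = g * toFG u * g⁻¹ ∧ toFG v' = g * toFG v * g⁻¹ := by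
  obtain ⟨g, u₀, v₀, hstd, hu₀, hv₀⟩ := exists_revStandardPair_conj h
  obtain ⟨g', u₀', v₀', hstd', hu₀', hv₀'⟩ := exists_revStandardPair_conj h'
  obtain ⟨rfl, rfl⟩ := hstd.eq_of_Avec_eq hstd'
    ((Avec_eq_of_toFG_eq_conj hu₀).symm.trans (hu.trans (Avec_eq_of_toFG_eq_conj hu₀')))
    ((Avec_eq_of_toFG_eq_conj hv₀).symm.trans (hv.trans (Avec_eq_of_toFG_eq_conj hv₀')))
  refine ⟨g' * g⁻¹, ?_, ?_⟩
  · rw [hu₀, hu₀']; group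
  · rw [hv₀, hv₀']; group

lemma closure_eq_top_of_surjective {σ : Subst} (h : Function.Surjective (endo σ)) :
    closure {toFG (σ 0), toFG (σ 1)} = ⊤ := by
  have h' : Function.Surjective (FreeGroup.lift fun i => toFG (σ i)) := h
  rw [FreeGroup.lift_surjective_iff_closure_range_eq_top] at h'
  have hrange : Set.range (fun i => toFG (σ i)) = {toFG (σ 0), toFG (σ 1)} := by
    ext; simp [Fin.exists_fin_two, eq_comm]
  rwa [← hrange]

theorem conj_iff_M_eq {σ τ : Subst} (hσ : Function.Surjective (endo σ))
    (hτ : Function.Surjective (endo τ)) : Conj σ τ ↔ M σ = M τ := by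
  constructor
  · rintro ⟨w, hw⟩
    rw [← abelMatrix_endo, ← abelMatrix_endo]
    exact abelMatrix_eq_of_conj hw
  · intro h
    have hA (j : A2) : Avec (τ j) = Avec (σ j) := funext fun i => (congrFun (congrFun h i) j).symm
    obtain ⟨g, h0, h1⟩ := exists_conj_of_Avec_eq (closure_eq_top_of_surjective hτ)
      (closure_eq_top_of_surjective hσ) (hA 0) (hA 1)
    refine ⟨g, fun x => ?_⟩
    have : (endo σ : FreeGroup A2 →* FreeGroup A2) = (MulAut.conj g).toMonoidHom.comp (endo τ) :=
      FreeGroup.ext_hom _ _ fun i => by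
        show endo σ (.of i) = g * endo τ (.of i) * g⁻¹
        fin_cases i <;> simpa [endo_of]
    exact DFunLike.congr_fun this x

lemma tauA_tauA (x : FreeGroup A2) : tauA (tauA x) = x := by
  have : (tauA : FreeGroup A2 →* FreeGroup A2).comp tauA = MonoidHom.id _ :=
    FreeGroup.ext_hom _ _ fun i => by
      show tauA (tauA (.of i)) = .of i
      fin_cases i <;> simp
  exact DFunLike.congr_fun this x

lemma endo_Esub_endo_Esub (x : FreeGroup A2) : endo Esub (endo Esub x) = x := by
  have : (endo Esub : FreeGroup A2 →* FreeGroup A2).comp (endo Esub) = MonoidHom.id _ :=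
    FreeGroup.ext_hom _ _ fun i => by
      show endo Esub (endo Esub (.of i)) = .of i
      fin_cases i <;> simp [endo_of, Esub, toFG]
  exact DFunLike.congr_fun this x

lemma M_Esub : M Esub = !![0, 1; 1, 0] := by
  ext i j; fin_cases i <;> fin_cases j <;> rfl

namespace IsReciprocal

variable {σ ρ : Subst} {φ : Monoid.End (FreeGroup A2)} (hrecip : IsReciprocal σ ρ φ)
include hrecip

lemma surjective_endo_left : Function.Surjective (endo σ) :=
  fun y => ⟨φ y, hrecip.2.1 y⟩

lemma surjective_endo_right : Function.Surjective (endo ρ) :=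
  fun y => ⟨tauA (endo σ (tauA y)), by rw [hrecip.2.2.2, tauA_tauA, hrecip.1, tauA_tauA]⟩

lemma M_eq : M ρ = !![-1, 0; 0, 1] * (M σ)⁻¹ * !![-1, 0; 0, 1] := by
  have hφ : φ * endo σ = 1 := MonoidHom.ext hrecip.1
  have hρ : endo ρ = tauA * φ * tauA := MonoidHom.ext hrecip.2.2.2
  have hinv : (M σ)⁻¹ = abelMatrix φ := Matrix.inv_eq_left_inv <| by
    rw [← abelMatrix_endo, ← abelMatrix_mul, hφ, abelMatrix_one]
  rw [← abelMatrix_endo, hρ, abelMatrix_mul, abelMatrix_mul, abelMatrix_tauA, hinv]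

theorem selfDual_iff (hdet : (M σ).det = 1) :
    SelfDual σ ρ ↔ M σ 0 0 = M σ 1 1 ∨ M σ 0 1 = M σ 1 0 := by
  have hE : Function.Surjective (endo Esub) := fun x => ⟨_, endo_Esub_endo_Esub x⟩
  have hEρE : Function.Surjective (endo (comp Esub (comp ρ Esub))) := by
    rw [endo_comp, endo_comp]
    exact hE.comp (hrecip.surjective_endo_right.comp hE)
  rw [SelfDual, conj_iff_M_eq hrecip.surjective_endo_left hrecip.surjective_endo_right,
    conj_iff_M_eq hrecip.surjective_endo_left hEρE, M_comp, M_comp, M_Esub, hrecip.M_eq,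
    ← mul_assoc, Matrix.eq_diag_mul_inv_mul_diag_iff hdet,
    Matrix.eq_swap_mul_diag_mul_inv_mul_diag_mul_swap_iff hdet]

end IsReciprocal

lemma Primitive.M_pos_of_ne {σ : Subst} (hσ : Primitive σ) {i j : A2} (hij : i ≠ j) :
    0 < M σ i j := by
  obtain ⟨n, -, hpos⟩ := hσ
  refine (Int.natCast_nonneg _).lt_of_ne fun h => (hpos i j).ne' ?_
  exact Matrix.pow_apply_eq_zero_of_apply_eq_zero hij h.symm n

lemma Primitive.M_pos {σ : Subst} (hσ : Primitive σ) (hdet : (M σ).det = 1) :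
    ∀ i j, 0 < M σ i j := by
  have h01 := hσ.M_pos_of_ne zero_ne_one
  have h10 := hσ.M_pos_of_ne one_ne_zero
  have h00 : 0 ≤ M σ 0 0 := Int.natCast_nonneg _
  have h11 : 0 ≤ M σ 1 1 := Int.natCast_nonneg _
  rw [Matrix.det_fin_two] at hdet
  simp only [Fin.forall_fin_two]
  exact ⟨⟨by nlinarith, h01⟩, h10, by nlinarith⟩

end TwoSubst

open TwoSubst in
theorem selfdual_tfae_general (σ ρ : Subst)
    (hprim : Primitive σ) (hdet : (M σ).det = 1)
    (φ : Monoid.End (FreeGroup A2)) (hrecip : IsReciprocal σ ρ φ) :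
    (SelfDual σ ρ ↔
      ((∃ m k : ℤ, 0 < m ∧ 0 < k ∧ k ∣ m ^ 2 - 1 ∧
          M σ = !![m, k; (m ^ 2 - 1) / k, m]) ∨
        (∃ m k : ℤ, 0 < m ∧ 0 < k ∧ m ∣ k ^ 2 + 1 ∧
          M σ = !![m, k; k, (k ^ 2 + 1) / m]))) ∧
    (SelfDual σ ρ ↔
      ((!![(-1 : ℤ), 0; 0, 1])⁻¹ * M σ * !![(-1 : ℤ), 0; 0, 1] = (M σ)⁻¹ ∨
        (!![(0 : ℤ), -1; 1, 0])⁻¹ * M σ * !![(0 : ℤ), -1; 1, 0] = (M σ)⁻¹)) ∧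
    (SelfDual σ ρ ↔
      ((!![(0 : ℤ), 1; 1, 0])ᵀ * M σ * !![(0 : ℤ), 1; 1, 0] = (M σ)ᵀ ∨
        (1 : Matrix (Fin 2) (Fin 2) ℤ)ᵀ * M σ * (1 : Matrix (Fin 2) (Fin 2) ℤ) = (M σ)ᵀ)) := by
  have hself := hrecip.selfDual_iff hdet
  have hpos := hprim.M_pos hdet
  exact ⟨hself.trans (Matrix.exists_param_iff hdet (hpos 0 0) (hpos 0 1)).symm,
    hself.trans (Matrix.conj_eq_inv_iff hdet).symm,
    hself.trans Matrix.transpose_conj_eq_transpose_iff.symm⟩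

open TwoSubst in
/-- For a primitive invertible substitution `σ` on `{a,b}` with
`det M_σ = 1` (with reciprocal `ρ = σ̄`), the following are equivalent:
(1) `σ` is selfdual; (2) `M_σ = [[m,k],[(m²−1)/k,m]]` for positive integers `m,k` with
`k ∣ m²−1`, or `M_σ = [[m,k],[k,(k²+1)/m]]` for positive integers `m,k` with
`m ∣ k²+1`; (3) `Q⁻¹·M_σ·Q = M_σ⁻¹` for `Q = [[−1,0],[0,1]]` or `Q = [[0,−1],[1,0]]`;
(4) `Pᵀ·M_σ·P = M_σᵀ` for `P = [[0,1],[1,0]]` or `P = 1`. -/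
theorem selfdual_tfae (σ ρ : Subst) (hne : NonErasing σ)
    (hprim : Primitive σ) (hdet : (M σ).det = 1)
    (φ : Monoid.End (FreeGroup A2)) (hrecip : IsReciprocal σ ρ φ) :
    (SelfDual σ ρ ↔
      ((∃ m k : ℤ, 0 < m ∧ 0 < k ∧ k ∣ m ^ 2 - 1 ∧
          M σ = !![m, k; (m ^ 2 - 1) / k, m]) ∨
        (∃ m k : ℤ, 0 < m ∧ 0 < k ∧ m ∣ k ^ 2 + 1 ∧
          M σ = !![m, k; k, (k ^ 2 + 1) / m]))) ∧
    (SelfDual σ ρ ↔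
      ((!![(-1 : ℤ), 0; 0, 1])⁻¹ * M σ * !![(-1 : ℤ), 0; 0, 1] = (M σ)⁻¹ ∨
        (!![(0 : ℤ), -1; 1, 0])⁻¹ * M σ * !![(0 : ℤ), -1; 1, 0] = (M σ)⁻¹)) ∧
    (SelfDual σ ρ ↔
      ((!![(0 : ℤ), 1; 1, 0])ᵀ * M σ * !![(0 : ℤ), 1; 1, 0] = (M σ)ᵀ ∨
        (1 : Matrix (Fin 2) (Fin 2) ℤ)ᵀ * M σ * (1 : Matrix (Fin 2) (Fin 2) ℤ) = (M σ)ᵀ)) :=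
  selfdual_tfae_general σ ρ hprim hdet φ hrecip
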